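/- Let a, b, c, d ∈ ℂ with positive real parts. Then for all n ∈ ℕ₀ and x ∈ (0,∞), the continuous dual Hahn polynomials satisfy the one-free-parameter connection relation S_n(x²; a,b,c) = Σ_{k=0}^n C(n,k) (k+a+b)_{n−k} (c−d)_{n−k} · S_k(x²; a,b,d). -/

import Mathlib

open Complex Finset

/-- The Pochhammer symbol (rising factorial) `(z)_n = z(z+1)⋯(z+n-1)`. -/
noncomputable def poch (z : ℂ) (n : ℕ) : ℂ := ∏ i ∈ Finset.range n, (z + i)

/-- The continuous dual Hahn polynomial `S_n(x²; a, b, c)`, via its terminating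
`₃F₂(-n, a+ix, a-ix; a+b, a+c; 1)` representation. -/
noncomputable def cdHahn (n : ℕ) (x : ℝ) (a b c : ℂ) : ℂ :=
  poch (a + b) n * poch (a + c) n *
    ∑ j ∈ Finset.range (n + 1),
      poch (-(n : ℂ)) j * poch (a + Complex.I * x) j * poch (a - Complex.I * x) j /
        (poch (a + b) j * poch (a + c) j * j.factorial)

/-! Write `S_n(x²; a,b,c) = (a+b)_n Σ_j (-n)_j (a+c+j)_{n-j} ω_j`, where the weights
`ω_j = (a+ix)_j (a-ix)_j / ((a+b)_j j!)` depend neither on `n` nor on `c`. Since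
`(k+a+b)_{n-k} (a+b)_k = (a+b)_n`, comparing the coefficients of `ω_j` on both sides reduces the
relation to `(-n)_j (u+w)_{n-j} = Σ_k C(n,k) (-k)_j (w)_{k-j} (u)_{n-k}` with `u = c-d` and
`w = a+d+j`. As `(-k)_j = (-1)^j k!/(k-j)!` vanishes for `k < j`, substituting `k = j+i` turns this
into the Chu–Vandermonde convolution `(u+w)_m = Σ_i C(m,i) (w)_i (u)_{m-i}`. -/

open Polynomial

theorem poch_eq_eval (z : ℂ) (n : ℕ) : poch z n = (ascPochhammer ℂ n).eval z := by
  induction n with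
  | zero => simp [poch]
  | succ n ih => rw [poch, prod_range_succ, ← poch, ih, ascPochhammer_succ_eval]

theorem poch_eq_neg_one_pow_mul_descPochhammer (z : ℂ) (n : ℕ) :
    poch z n = (-1) ^ n * (descPochhammer ℤ n).smeval (-z) := by
  rw [poch_eq_eval, ← ascPochhammer_smeval_eq_eval, ← neg_neg z,
    ascPochhammer_smeval_neg_eq_descPochhammer, neg_neg, Units.smul_def,
    Int.coe_negOnePow_natCast, zsmul_eq_mul, Int.cast_pow, Int.cast_neg, Int.cast_one]

theorem poch_add (z : ℂ) (m n : ℕ) : poch z (m + n) = poch z m * poch (z + m) n := by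
  simp only [poch_eq_eval, ← ascPochhammer_mul, eval_mul, eval_comp, eval_add, eval_X,
    eval_natCast]

theorem poch_neg_natCast (k j : ℕ) : poch (-(k : ℂ)) j = (-1) ^ j * k.descFactorial j := by
  rw [poch_eq_eval, ascPochhammer_eval_neg_eq_descPochhammer, descPochhammer_eval_eq_descFactorial]

theorem poch_ne_zero {z : ℂ} (hz : 0 < z.re) (n : ℕ) : poch z n ≠ 0 := by
  rw [poch_eq_eval, Ne, ascPochhammer_eval_eq_zero_iff]
  rintro ⟨k, -, hk⟩
  have hre := congrArg re hk
  rw [natCast_re, neg_re] at hre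
  linarith [k.cast_nonneg (α := ℝ)]

theorem poch_add_eq_sum (u v : ℂ) (n : ℕ) :
    poch (u + v) n = ∑ k ∈ range (n + 1), (n.choose k : ℂ) * poch u k * poch v (n - k) := by
  rw [poch_eq_neg_one_pow_mul_descPochhammer, neg_add,
    Ring.descPochhammer_smeval_add n (Commute.all (-u) (-v)),
    Nat.sum_antidiagonal_eq_sum_range_succ (fun i j => (n.choose i : ℂ) *
      ((descPochhammer ℤ i).smeval (-u) * (descPochhammer ℤ j).smeval (-v))), mul_sum]
  refine sum_congr rfl fun k hk => ?_
  rw [poch_eq_neg_one_pow_mul_descPochhammer, poch_eq_neg_one_pow_mul_descPochhammer,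
    ← pow_mul_pow_sub (-1 : ℂ) (Nat.le_of_lt_succ (mem_range.1 hk))]
  ring

theorem Nat.choose_mul_descFactorial {n k j : ℕ} (hjk : j ≤ k) :
    n.choose k * k.descFactorial j = n.descFactorial j * (n - j).choose (k - j) := by
  rw [Nat.descFactorial_eq_factorial_mul_choose, Nat.descFactorial_eq_factorial_mul_choose,
    mul_left_comm, Nat.choose_mul hjk, mul_assoc]

theorem poch_neg_natCast_eq_zero {k j : ℕ} (hkj : k < j) : poch (-(k : ℂ)) j = 0 := by
  rw [poch_neg_natCast, Nat.descFactorial_eq_zero_iff_lt.2 hkj, Nat.cast_zero, mul_zero]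

theorem poch_neg_natCast_mul_poch_add_eq_sum (w u : ℂ) (n j : ℕ) :
    poch (-(n : ℂ)) j * poch (w + u) (n - j) =
      ∑ k ∈ range (n + 1),
        (n.choose k : ℂ) * poch (-(k : ℂ)) j * poch w (k - j) * poch u (n - k) := by
  rcases lt_or_ge n j with hnj | hjn
  · rw [poch_neg_natCast_eq_zero hnj, zero_mul, eq_comm]
    refine sum_eq_zero fun k hk => ?_
    rw [poch_neg_natCast_eq_zero (by grind), mul_zero, zero_mul, zero_mul]
  obtain ⟨m, rfl⟩ := Nat.exists_eq_add_of_le hjn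
  have hlow : ∀ k ∈ range j, (((j + m).choose k : ℂ) * poch (-(k : ℂ)) j * poch w (k - j) *
      poch u (j + m - k)) = 0 := fun k hk => by
    rw [poch_neg_natCast_eq_zero (mem_range.1 hk), mul_zero, zero_mul, zero_mul]
  rw [add_assoc, sum_range_add, sum_eq_zero hlow, zero_add, Nat.add_sub_cancel_left,
    poch_add_eq_sum, mul_sum]
  refine sum_congr rfl fun i _ => ?_
  have hcoeff : ((j + m).choose (j + i) : ℂ) * (j + i).descFactorial j =
      (j + m).descFactorial j * m.choose i := by
    have := Nat.choose_mul_descFactorial (n := j + m) (Nat.le_add_right j i)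
    rw [Nat.add_sub_cancel_left, Nat.add_sub_cancel_left] at this
    exact_mod_cast this
  rw [Nat.add_sub_cancel_left, Nat.add_sub_add_left, poch_neg_natCast, poch_neg_natCast]
  linear_combination (-1 : ℂ) ^ j * poch w i * poch u (m - i) * hcoeff.symm

theorem poch_mul_poch_add_natCast (z : ℂ) {k n : ℕ} (hkn : k ≤ n) :
    poch z k * poch (z + k) (n - k) = poch z n := by
  rw [← poch_add, Nat.add_sub_cancel' hkn]

noncomputable def cdHahnWeight (x : ℝ) (a b : ℂ) (j : ℕ) : ℂ :=
  poch (a + I * x) j * poch (a - I * x) j / (poch (a + b) j * j.factorial)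

theorem cdHahn_eq_sum (x : ℝ) (a b c : ℂ) (hac : 0 < (a + c).re) {n N : ℕ} (hnN : n ≤ N) :
    cdHahn n x a b c = poch (a + b) n * ∑ j ∈ range (N + 1),
      poch (-(n : ℂ)) j * poch (a + c + j) (n - j) * cdHahnWeight x a b j := by
  have hvanish : ∀ j ∈ range (N + 1), j ∉ range (n + 1) →
      poch (-(n : ℂ)) j * poch (a + c + j) (n - j) * cdHahnWeight x a b j = 0 := fun j _ hj => by
    rw [poch_neg_natCast_eq_zero (by simpa using hj), zero_mul, zero_mul]
  have hext := sum_subset (range_subset_range.2 (Nat.succ_le_succ hnN)) hvanish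
  rw [cdHahn, mul_assoc, ← hext, mul_sum]
  congr 1
  refine sum_congr rfl fun j hj => ?_
  have hne := poch_ne_zero hac j
  rw [← poch_mul_poch_add_natCast (a + c) (Nat.le_of_lt_succ (mem_range.1 hj)), cdHahnWeight]
  field_simp

theorem cdHahn_connection_one_free_general (a b c d : ℂ)
    (ha : 0 < a.re) (hc : 0 < c.re) (hd : 0 < d.re)
    (n : ℕ) (x : ℝ) :
    cdHahn n x a b c =
      ∑ k ∈ Finset.range (n + 1),
        (n.choose k : ℂ) * poch ((k : ℂ) + a + b) (n - k) * poch (c - d) (n - k) *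
          cdHahn k x a b d := by
  have hac : 0 < (a + c).re := by rw [add_re]; positivity
  have had : 0 < (a + d).re := by rw [add_re]; positivity
  have hexpand : ∀ k ∈ range (n + 1),
      (n.choose k : ℂ) * poch ((k : ℂ) + a + b) (n - k) * poch (c - d) (n - k) *
          cdHahn k x a b d =
        poch (a + b) n * ∑ j ∈ range (n + 1), (n.choose k : ℂ) * poch (-(k : ℂ)) j *
          poch (a + d + j) (k - j) * poch (c - d) (n - k) * cdHahnWeight x a b j := by
    intro k hk
    have hkn := Nat.le_of_lt_succ (mem_range.1 hk)
    rw [cdHahn_eq_sum x a b d had hkn, ← poch_mul_poch_add_natCast (a + b) hkn,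
      show (k : ℂ) + a + b = a + b + k by ring]
    simp only [mul_sum]
    exact sum_congr rfl fun j _ => by ring
  rw [cdHahn_eq_sum x a b c hac le_rfl, sum_congr rfl hexpand, ← mul_sum, sum_comm]
  refine congrArg _ (sum_congr rfl fun j _ => ?_)
  rw [← sum_mul, ← poch_neg_natCast_mul_poch_add_eq_sum,
    show a + d + j + (c - d) = a + c + j by ring]

theorem cdHahn_connection_one_free (a b c d : ℂ)
    (ha : 0 < a.re) (hb : 0 < b.re) (hc : 0 < c.re) (hd : 0 < d.re)
    (n : ℕ) (x : ℝ) (hx : 0 < x) :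
    cdHahn n x a b c =
      ∑ k ∈ Finset.range (n + 1),
        (n.choose k : ℂ) * poch ((k : ℂ) + a + b) (n - k) * poch (c - d) (n - k) *
          cdHahn k x a b d :=
  cdHahn_connection_one_free_general a b c d ha hc hd n x
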